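/- arXiv:1202.2683 — 6 statements merged into one kernel-verified Lean document; each statement's English description precedes it below -/
import Mathlib

section
/- Variation independence of marginal and conditional in the logistic model: let X be a finite subset of ℝᵏ, and let Θ be the set of joint distributions on X×{0,1} of logistic form p(x,y) = q(x)·exp(y(α+βᵀx))/(1+exp(α+βᵀx)) with q a full-support probability mass function on X. Then for every θ∈Θ with Y-marginal parameter γ = P(Y=1) ∈ (0,1), and every γ'∈(0,1), there exists θ'∈Θ whose conditional family θ'_{X|Y} equals θ_{X|Y} and whose Y-marginal satisfies P'(Y=1)=γ'. That is, θ_Y is variation independent of θ_{X|Y}. -/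
/-- Joint logistic density `p(x,y | q, α, β)` on `X × {0,1}` (y given as a real in {0,1}). -/
noncomputable def jointLogistic {k : ℕ} (q : (Fin k → ℝ) → ℝ) (α : ℝ) (β : Fin k → ℝ)
    (x : Fin k → ℝ) (y : ℝ) : ℝ :=
  q x * Real.exp (y * (α + ∑ i, β i * x i)) / (1 + Real.exp (α + ∑ i, β i * x i))

/-- Retrospective conditional `θ_{X|Y=y}(x)` for the joint logistic model on a finite `X`. -/
noncomputable def condXgivenY {k : ℕ} (X : Finset (Fin k → ℝ)) (q : (Fin k → ℝ) → ℝ)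
    (α : ℝ) (β : Fin k → ℝ) (y : ℝ) (x : Fin k → ℝ) : ℝ :=
  jointLogistic q α β x y / ∑ x' ∈ X, jointLogistic q α β x' y

/-- variation independence of `θ_Y` from `θ_{X|Y}` in the joint
logistic model over a finite covariate space: for any joint logistic
distribution with `P(Y=1) = γ ∈ (0,1)` and any `γ' ∈ (0,1)` there is another
joint logistic distribution (same `β`) with the same conditionals `θ_{X|Y}` and
`P(Y=1) = γ'`. -/
theorem thetaY_variation_independent {k : ℕ} (X : Finset (Fin k → ℝ))
    (q : (Fin k → ℝ) → ℝ) (α : ℝ) (β : Fin k → ℝ)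
    (hq : ∀ x ∈ X, 0 < q x) (hqs : ∑ x ∈ X, q x = 1)
    (γ γ' : ℝ) (hγdef : γ = ∑ x ∈ X, jointLogistic q α β x 1)
    (hγ : γ ∈ Set.Ioo (0:ℝ) 1) (hγ' : γ' ∈ Set.Ioo (0:ℝ) 1) :
    ∃ (q'' : (Fin k → ℝ) → ℝ) (α'' : ℝ),
      (∀ x ∈ X, 0 < q'' x) ∧ (∑ x ∈ X, q'' x = 1)
      ∧ (∀ y : ℝ, y = 0 ∨ y = 1 → ∀ x ∈ X,
          condXgivenY X q'' α'' β y x = condXgivenY X q α β y x)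
      ∧ (∑ x ∈ X, jointLogistic q'' α'' β x 1 = γ') := by
  obtain ⟨hγ0, hγ1⟩ := hγ
  obtain ⟨hγ'0, hγ'1⟩ := hγ'
  have h1γ : (0:ℝ) < 1 - γ := by linarith
  have h1γ' : (0:ℝ) < 1 - γ' := by linarith
  set C : ℝ := γ' * (1 - γ) / (γ * (1 - γ')) with hC
  have hCpos : 0 < C := div_pos (mul_pos hγ'0 h1γ) (mul_pos hγ0 h1γ')
  set s : (Fin k → ℝ) → ℝ := fun x => α + ∑ i, β i * x i with hs
  set q'' : (Fin k → ℝ) → ℝ :=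
    fun x => (1 - γ') / (1 - γ) * q x * (1 + C * Real.exp (s x)) / (1 + Real.exp (s x))
    with hq''
  set α'' : ℝ := α + Real.log C with hα''
  have hE : ∀ x : Fin k → ℝ, 0 < 1 + Real.exp (s x) := fun x => by positivity
  have hE' : ∀ x : Fin k → ℝ, 0 < 1 + C * Real.exp (s x) := fun x => by positivity
  have hexp : ∀ x : Fin k → ℝ, Real.exp (α'' + ∑ i, β i * x i) = C * Real.exp (s x) := by
    intro x
    have : α'' + ∑ i, β i * x i = Real.log C + s x := by rw [hα'', hs]; ring
    rw [this, Real.exp_add, Real.exp_log hCpos]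
  have hCγ : (1 - γ') / (1 - γ) * C = γ' / γ := by
    rw [hC]; field_simp
  -- pointwise identities
  have key1 : ∀ x : Fin k → ℝ,
      jointLogistic q'' α'' β x 1 = (γ' / γ) * jointLogistic q α β x 1 := by
    intro x
    unfold jointLogistic
    rw [hexp x, ← hCγ]
    have e1 : (1:ℝ) * (α'' + ∑ i, β i * x i) = α'' + ∑ i, β i * x i := one_mul _
    have e2 : (1:ℝ) * (α + ∑ i, β i * x i) = s x := by rw [one_mul, hs]
    rw [e1, e2, hexp x]
    have h1 := (hE x).ne'
    have h2 := (hE' x).ne'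
    have h3 : (1 - γ) ≠ 0 := h1γ.ne'
    rw [hq'']
    field_simp
    ring
  have key0 : ∀ x : Fin k → ℝ,
      jointLogistic q'' α'' β x 0 = ((1 - γ') / (1 - γ)) * jointLogistic q α β x 0 := by
    intro x
    unfold jointLogistic
    rw [hexp x]
    have e2 : Real.exp (α + ∑ i, β i * x i) = Real.exp (s x) := by rw [hs]
    rw [e2]
    simp only [zero_mul, Real.exp_zero]
    have h1 := (hE x).ne'
    have h2 := (hE' x).ne'
    have h3 : (1 - γ) ≠ 0 := h1γ.ne'
    rw [hq'']
    field_simp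
  have hsplit : ∀ (Q : (Fin k → ℝ) → ℝ) (A : ℝ) (x : Fin k → ℝ),
      jointLogistic Q A β x 0 + jointLogistic Q A β x 1 = Q x := by
    intro Q A x
    unfold jointLogistic
    have hEp : (0:ℝ) < 1 + Real.exp (A + ∑ i, β i * x i) := by positivity
    simp only [zero_mul, Real.exp_zero, one_mul]
    field_simp
  have hsum1 : ∑ x ∈ X, jointLogistic q α β x 1 = γ := hγdef.symm
  have hsum0 : ∑ x ∈ X, jointLogistic q α β x 0 = 1 - γ := by
    have h : ∑ x ∈ X, (jointLogistic q α β x 0 + jointLogistic q α β x 1) = 1 := by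
      rw [Finset.sum_congr rfl fun x _ => hsplit q α x, hqs]
    rw [Finset.sum_add_distrib, hsum1] at h
    linarith
  have hsum1'' : ∑ x ∈ X, jointLogistic q'' α'' β x 1 = γ' := by
    rw [Finset.sum_congr rfl fun x _ => key1 x, ← Finset.mul_sum, hsum1]
    field_simp
  have hsum0'' : ∑ x ∈ X, jointLogistic q'' α'' β x 0 = 1 - γ' := by
    rw [Finset.sum_congr rfl fun x _ => key0 x, ← Finset.mul_sum, hsum0]
    field_simp
  refine ⟨q'', α'', ?_, ?_, ?_, hsum1''⟩
  · intro x hx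
    have hqx := hq x hx
    have h1 := hE x
    have h2 := hE' x
    rw [hq'']
    positivity
  · have h : ∑ x ∈ X, q'' x
        = ∑ x ∈ X, (jointLogistic q'' α'' β x 0 + jointLogistic q'' α'' β x 1) :=
      Finset.sum_congr rfl fun x _ => (hsplit q'' α'' x).symm
    rw [h, Finset.sum_add_distrib, hsum0'', hsum1'']
    ring
  · rintro y (rfl | rfl) x hx
    · unfold condXgivenY
      rw [key0 x, Finset.sum_congr rfl fun x' _ => key0 x', ← Finset.mul_sum]
      have hc : ((1 - γ') / (1 - γ)) ≠ 0 := (div_pos h1γ' h1γ).ne'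
      rw [mul_div_mul_left _ _ hc]
    · unfold condXgivenY
      rw [key1 x, Finset.sum_congr rfl fun x' _ => key1 x', ← Finset.mul_sum]
      have hc : (γ' / γ) ≠ 0 := (div_pos hγ'0 hγ0).ne'
      rw [mul_div_mul_left _ _ hc]
end

section
/- In the setting of the previous variation independence construction, the new covariate marginal q'(x) = q(x)·(1−γ')(1+exp(α'+βᵀx))/((1−γ)(1+exp(α+βᵀx))), with α' = α − log(γ/(1−γ)) + log(γ'/(1−γ')), sums to 1 over x∈X, where γ = Σ_x q(x)·exp(α+βᵀx)/(1+exp(α+βᵀx)). -/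
/-!
Write `σ` for the logistic function, so that the summand defining `γ` is `q x · σ(η x)` with
`η x = α + βᵀx`; as a weighted mean of values in `(0, 1)`, `γ` lies in `(0, 1)`. Shifting the
intercept from `α` to `α'` multiplies the odds `exp (η x)` by `(γ'/(1-γ')) / (γ/(1-γ))`, which
turns the ratio `q'(x) / q(x)` into `(1-γ')/(1-γ) · (1 - σ(η x)) + γ'/γ · σ(η x)`.
Summing against `q` gives `(1-γ') + γ' = 1`.
-/

open Real Set

lemma Real.exp_div_one_add_exp (t : ℝ) : exp t / (1 + exp t) = sigmoid t := by
  rw [sigmoid_def, exp_neg]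
  field_simp
  ring

lemma Finset.sum_mul_mem_Ioo {ι : Type*} {s : Finset ι} {w f : ι → ℝ} {a b : ℝ}
    (hw : ∀ i ∈ s, 0 < w i) (hws : ∑ i ∈ s, w i = 1) (hf : ∀ i ∈ s, f i ∈ Set.Ioo a b) :
    ∑ i ∈ s, w i * f i ∈ Set.Ioo a b := by
  have hs : s.Nonempty := nonempty_of_sum_ne_zero (hws ▸ one_ne_zero)
  have hmean : ∀ c, ∑ i ∈ s, w i * c = c := fun c => by rw [← sum_mul, hws, one_mul]
  constructor
  · calc a = ∑ i ∈ s, w i * a := (hmean a).symm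
      _ < ∑ i ∈ s, w i * f i :=
        sum_lt_sum_of_nonempty hs fun i hi => mul_lt_mul_of_pos_left (hf i hi).1 (hw i hi)
  · calc ∑ i ∈ s, w i * f i < ∑ i ∈ s, w i * b :=
          sum_lt_sum_of_nonempty hs fun i hi => mul_lt_mul_of_pos_left (hf i hi).2 (hw i hi)
      _ = b := hmean b

lemma one_add_exp_sub_logit_add_logit_div {a b : ℝ} (ha : a ∈ Ioo 0 1) (hb : b ∈ Ioo 0 1)
    (t : ℝ) :
    (1 - b) * (1 + exp (t - log (a / (1 - a)) + log (b / (1 - b)))) / ((1 - a) * (1 + exp t))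
      = (1 - b) / (1 - a) * (1 - sigmoid t) + b / a * sigmoid t := by
  obtain ⟨ha0, ha1⟩ := ha
  obtain ⟨hb0, hb1⟩ := hb
  have ha1' : 0 < 1 - a := sub_pos.mpr ha1
  have hb1' : 0 < 1 - b := sub_pos.mpr hb1
  have hodds : exp (t - log (a / (1 - a)) + log (b / (1 - b)))
      = exp t * ((1 - a) / a) * (b / (1 - b)) := by
    rw [exp_add, exp_sub, exp_log (by positivity), exp_log (by positivity)]
    field_simp
  rw [hodds, ← exp_div_one_add_exp]
  field_simp
  ring

lemma Finset.sum_mul_reweight_eq_one {ι : Type*} {s : Finset ι} {w p : ι → ℝ} {a b : ℝ}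
    (hws : ∑ i ∈ s, w i = 1) (hwp : ∑ i ∈ s, w i * p i = a) (ha0 : a ≠ 0) (ha1 : a ≠ 1) :
    ∑ i ∈ s, w i * ((1 - b) / (1 - a) * (1 - p i) + b / a * p i) = 1 := by
  have hsplit : ∀ i, w i * ((1 - b) / (1 - a) * (1 - p i) + b / a * p i)
      = (1 - b) / (1 - a) * (w i - w i * p i) + b / a * (w i * p i) := fun i => by ring
  simp only [hsplit, sum_add_distrib, ← mul_sum, sum_sub_distrib, hws, hwp]
  have : 1 - a ≠ 0 := sub_ne_zero.mpr (Ne.symm ha1)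
  field_simp
  ring

/-- the new covariate marginal
`q'(x) = q(x)·(1−γ')(1+exp(α'+βᵀx))/((1−γ)(1+exp(α+βᵀx)))`, with
`α' = α − log(γ/(1−γ)) + log(γ'/(1−γ'))` and
`γ = Σ_x q(x)·exp(α+βᵀx)/(1+exp(α+βᵀx))`, sums to 1 over `x ∈ X`. -/
theorem new_marginal_sums_to_one {k : ℕ} (X : Finset (Fin k → ℝ))
    (q : (Fin k → ℝ) → ℝ) (α : ℝ) (β : Fin k → ℝ)
    (hq : ∀ x ∈ X, 0 < q x) (hqs : ∑ x ∈ X, q x = 1)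
    (γ γ' α' : ℝ)
    (hγdef : γ = ∑ x ∈ X,
      q x * Real.exp (α + ∑ i, β i * x i) / (1 + Real.exp (α + ∑ i, β i * x i)))
    (hγ' : γ' ∈ Set.Ioo (0:ℝ) 1)
    (hα' : α' = α - Real.log (γ / (1 - γ)) + Real.log (γ' / (1 - γ')))
    (q' : (Fin k → ℝ) → ℝ)
    (hq'def : ∀ x ∈ X, q' x =
      q x * ((1 - γ') * (1 + Real.exp (α' + ∑ i, β i * x i)))
        / ((1 - γ) * (1 + Real.exp (α + ∑ i, β i * x i)))) :
    ∑ x ∈ X, q' x = 1 := by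
  set η : (Fin k → ℝ) → ℝ := fun x => α + ∑ i, β i * x i
  have hγσ : γ = ∑ x ∈ X, q x * sigmoid (η x) := by
    simp only [hγdef, mul_div_assoc, exp_div_one_add_exp, η]
  have hγ : γ ∈ Ioo 0 1 :=
    hγσ ▸ Finset.sum_mul_mem_Ioo hq hqs fun x _ => ⟨sigmoid_pos _, sigmoid_lt_one _⟩
  calc ∑ x ∈ X, q' x
      = ∑ x ∈ X, q x * ((1 - γ') / (1 - γ) * (1 - sigmoid (η x)) + γ' / γ * sigmoid (η x)) := by
        refine Finset.sum_congr rfl fun x hx => ?_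
        have hshift : α' + ∑ i, β i * x i = η x - log (γ / (1 - γ)) + log (γ' / (1 - γ')) := by
          rw [hα']; ring
        rw [hq'def x hx, hshift, mul_div_assoc, one_add_exp_sub_logit_add_logit_div hγ hγ']
    _ = 1 := Finset.sum_mul_reweight_eq_one hqs hγσ.symm hγ.1.ne' hγ.2.ne
end

section
/- Joint variation independence of both marginals from the odds ratio: for the joint logistic model over finite X ⊂ ℝᵏ, the pair (θ_X, θ_Y) is variation independent of β, i.e., the set of achievable pairs (θ_X, θ_Y) does not depend on the value of β: for every β∈ℝᵏ, every full-support pmf μ on X and every γ'∈(0,1), there exists a joint logistic distribution θ with log-odds parameter β, covariate marginal θ_X = μ and Y-marginal P(Y=1) = γ'. -/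
/-- joint variation independence of the pair of marginals
`(θ_X, θ_Y)` from the odds-ratio parameter `β` in the joint logistic model over
a finite covariate space: for every `β`, every full-support pmf `μ` on `X` and
every `γ' ∈ (0,1)` there is a joint logistic distribution with parameter `β`,
covariate marginal `μ` and `P(Y=1) = γ'`. -/
theorem marginals_variation_independent_of_beta {k : ℕ} (X : Finset (Fin k → ℝ))
    (hX : X.Nonempty) (β : Fin k → ℝ) (μ : (Fin k → ℝ) → ℝ)
    (hμ : ∀ x ∈ X, 0 < μ x) (hμs : ∑ x ∈ X, μ x = 1)
    (γ' : ℝ) (hγ' : γ' ∈ Set.Ioo (0:ℝ) 1) :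
    ∃ α : ℝ, ∑ x ∈ X,
        μ x * Real.exp (α + ∑ i, β i * x i) / (1 + Real.exp (α + ∑ i, β i * x i)) = γ' := by
  set c : (Fin k → ℝ) → ℝ := fun x => ∑ i, β i * x i with hc
  set f : ℝ → ℝ := fun α => ∑ x ∈ X,
      μ x * Real.exp (α + c x) / (1 + Real.exp (α + c x)) with hf
  have hden : ∀ (α : ℝ) (x : Fin k → ℝ), (1 : ℝ) + Real.exp (α + c x) ≠ 0 := by
    intro α x
    positivity
  have hcont : Continuous f := by
    apply continuous_finset_sum
    intro x _
    exact (continuous_const.mul ((continuous_id.add continuous_const).rexp)).div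
      (continuous_const.add ((continuous_id.add continuous_const).rexp)) (hden · x)
  -- limit at -∞ is 0
  have hbot : Filter.Tendsto f Filter.atBot (nhds 0) := by
    have h0 : (0 : ℝ) = ∑ x ∈ X, (0 : ℝ) := by simp
    rw [h0]
    apply tendsto_finset_sum
    intro x _
    have he : Filter.Tendsto (fun α => Real.exp (α + c x)) Filter.atBot (nhds 0) := by
      apply Filter.Tendsto.comp Real.tendsto_exp_atBot
      exact Filter.tendsto_atBot_add_const_right _ _ Filter.tendsto_id
    have : Filter.Tendsto (fun α => μ x * Real.exp (α + c x) / (1 + Real.exp (α + c x)))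
        Filter.atBot (nhds (μ x * 0 / (1 + 0))) := by
      exact ((Filter.Tendsto.const_mul _ he).div
        (Filter.Tendsto.const_add _ he) (by norm_num))
    simpa using this
  -- limit at +∞ is 1
  have htop : Filter.Tendsto f Filter.atTop (nhds 1) := by
    have h1 : Filter.Tendsto f Filter.atTop (nhds (∑ x ∈ X, μ x)) := by
      apply tendsto_finset_sum
      intro x _
      have he : Filter.Tendsto (fun α => Real.exp (-(α + c x))) Filter.atTop (nhds 0) := by
        apply Filter.Tendsto.comp Real.tendsto_exp_atBot
        apply Filter.tendsto_neg_atBot_iff.mpr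
        exact Filter.tendsto_atTop_add_const_right _ _ Filter.tendsto_id
      have key : ∀ α : ℝ, μ x * Real.exp (α + c x) / (1 + Real.exp (α + c x))
          = μ x / (Real.exp (-(α + c x)) + 1) := by
        intro α
        rw [Real.exp_neg]
        have hpos := Real.exp_pos (α + c x)
        field_simp
      simp_rw [key]
      have : Filter.Tendsto (fun α => μ x / (Real.exp (-(α + c x)) + 1))
          Filter.atTop (nhds (μ x / (0 + 1))) :=
        tendsto_const_nhds.div (he.add_const 1) (by norm_num)
      simpa using this
    rwa [hμs] at h1
  obtain ⟨h0, h1⟩ := hγ'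
  obtain ⟨a, ha⟩ := ((hbot.eventually (eventually_lt_nhds h0)).exists)
  obtain ⟨b, hb⟩ := ((htop.eventually (eventually_gt_nhds h1)).exists)
  have : γ' ∈ Set.uIcc (f a) (f b) := by
    rw [Set.mem_uIcc]
    left; exact ⟨le_of_lt ha, le_of_lt hb⟩
  obtain ⟨α, _, hα⟩ := intermediate_value_uIcc (hcont.continuousOn) this
  exact ⟨α, hα⟩
end

section
/- Strong hyper Markov property of cross-ratio-modified Dirichlet densities on 2×2 tables: let π(θ) ∝ h(θ₀₀θ₁₁/(θ₀₁θ₁₀))·θ₀₀^{a₀₀−1}θ₀₁^{a₀₁−1}θ₁₀^{a₁₀−1}θ₁₁^{a₁₁−1} be a probability density on the open 3-simplex {θ∈(0,1)⁴ : Σθ_{xy}=1}, where h is positive and the density is integrable. Under the reparametrization θ_{xy} = θ_{+y}·θ_{x|y} (with θ_{+y}=θ_{0y}+θ_{1y}, θ_{x|y}=θ_{xy}/θ_{+y}), the induced joint density of (θ_{+1}, θ_{0|0}, θ_{0|1}) factorizes into a function of θ_{+1} alone times a function of (θ_{0|0},θ_{0|1}) alone; i.e., the Y-marginal parameter is independent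 of the X-given-Y conditional parameters. -/
/-- strong hyper Markov property of cross-ratio-modified Dirichlet
densities on 2×2 tables. Writing `θ_{0y} = ... , θ_{1y} = ...` in terms of the
`Y`-marginal `m = θ_{+1}` and the conditionals `c0 = θ_{0|0}`, `c1 = θ_{0|1}`,
the induced density (including the Jacobian factor `m(1−m)`) of
`(m, c0, c1)` factorizes into a function of `m` alone times a function of
`(c0, c1)` alone. -/
theorem cross_ratio_dirichlet_shm_2x2 (a : Fin 2 → Fin 2 → ℝ)
    (ha : ∀ x y, 0 < a x y) (h : ℝ → ℝ) (hh : ∀ z, 0 < z → 0 < h z) :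
    ∃ (u : ℝ → ℝ) (v : ℝ → ℝ → ℝ),
      ∀ m c0 c1 : ℝ, m ∈ Set.Ioo (0:ℝ) 1 → c0 ∈ Set.Ioo (0:ℝ) 1 → c1 ∈ Set.Ioo (0:ℝ) 1 →
        h ((((1 - m) * c0) * (m * (1 - c1))) / ((m * c1) * ((1 - m) * (1 - c0))))
            * ((1 - m) * c0) ^ (a 0 0 - 1)
            * (m * c1) ^ (a 0 1 - 1)
            * ((1 - m) * (1 - c0)) ^ (a 1 0 - 1)
            * (m * (1 - c1)) ^ (a 1 1 - 1)
            * (m * (1 - m))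
          = u m * v c0 c1 := by
  refine ⟨fun m => (1 - m) ^ (a 0 0 - 1) * (1 - m) ^ (a 1 0 - 1) *
      (m ^ (a 0 1 - 1) * m ^ (a 1 1 - 1)) * (m * (1 - m)),
    fun c0 c1 => h (c0 * (1 - c1) / (c1 * (1 - c0))) *
      c0 ^ (a 0 0 - 1) * c1 ^ (a 0 1 - 1) * (1 - c0) ^ (a 1 0 - 1) * (1 - c1) ^ (a 1 1 - 1),
    ?_⟩
  rintro m c0 c1 ⟨hm0, hm1⟩ ⟨hc00, hc01⟩ ⟨hc10, hc11⟩
  have h1m : (0:ℝ) < 1 - m := by linarith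
  have h1c0 : (0:ℝ) < 1 - c0 := by linarith
  have h1c1 : (0:ℝ) < 1 - c1 := by linarith
  have harg : (((1 - m) * c0) * (m * (1 - c1))) / ((m * c1) * ((1 - m) * (1 - c0)))
      = c0 * (1 - c1) / (c1 * (1 - c0)) := by
    field_simp
  rw [harg, Real.mul_rpow h1m.le hc00.le, Real.mul_rpow hm0.le hc10.le,
    Real.mul_rpow h1m.le h1c0.le, Real.mul_rpow hm0.le h1c1.le]
  ring
end

section
/- Strong hyper Markov property of cross-ratio-modified Dirichlet densities on general 2-way tables: let θ be a random probability table on a finite product X×Y with density proportional to h((θ_{xy}θ_{x*y*}/(θ_{xy*}θ_{x*y}))_{x≠x*,y≠y*})·Π_{x,y}θ_{xy}^{a_{xy}−1} on the open simplex, for fixed reference cells x*∈X, y*∈Y, positive integrable h, and a_{xy}>0. Then under the change of variables θ_{xy} = θ_{+y}θ_{x|y}, the joint density factorizes as (Π_y θ_{+y}^{a_{+y}−1}) times a function of the conditionals (θ_{x|y}) alone, where a_{+y}=Σ_x a_{xy}; hence the Y-marginal (θ_{+y})_y is independent of the conditional family (θ_{x|y})_{x,y}. By symmetry of the cross-ratio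 expression, the X-marginal is likewise independent of (θ_{y|x}), so the law is strong hyper Markov. -/
open Finset in
lemma aux_prod_split {X Y : Type*} [Fintype X] [Fintype Y]
    (m : Y → ℝ) (c : X → Y → ℝ) (a : X → Y → ℝ)
    (hm : ∀ y, 0 < m y) (hc : ∀ x y, 0 < c x y) :
    (∏ x, ∏ y, (m y * c x y) ^ (a x y - 1)) * (∏ y, m y ^ ((Fintype.card X : ℝ) - 1))
      = (∏ y, m y ^ ((∑ x, a x y) - 1)) * ∏ x, ∏ y, c x y ^ (a x y - 1) := by
  have h1 : ∀ x y, (m y * c x y) ^ (a x y - 1)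
      = m y ^ (a x y - 1) * c x y ^ (a x y - 1) := fun x y =>
    Real.mul_rpow (hm y).le (hc x y).le
  simp only [h1, prod_mul_distrib]
  rw [Finset.prod_comm (f := fun x y => m y ^ (a x y - 1))]
  have h2 : ∀ y, (∏ x, m y ^ (a x y - 1)) = m y ^ (∑ x, (a x y - 1)) := fun y =>
    (Real.rpow_sum_of_pos (hm y) _ _).symm
  simp only [h2]
  rw [mul_right_comm, ← prod_mul_distrib]
  congr 1
  refine Finset.prod_congr rfl fun y _ => ?_
  rw [← Real.rpow_add (hm y)]
  congr 1
  rw [Finset.sum_sub_distrib]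
  simp [Finset.card_univ]

/-- strong hyper Markov property of cross-ratio-modified Dirichlet
densities on general 2-way tables (Theorem 4 of the paper). Writing
`θ_{xy} = marg y · cond x y` in terms of the `Y`-marginal `(marg y)_y` and the
conditional family `(cond x y)_{x,y}` (with `θ_{x|y} = cond x y`), the density
`h(cross-ratios)·Π_{x,y} θ_{xy}^{a_{xy}−1}` times the Jacobian factor
`Π_y marg y^{|X|−1}` factorizes as `Π_y marg y^{a_{+y}−1}` times a function of
the conditionals alone; hence the `Y`-marginal is independent of `θ_{X|Y}`.
By the symmetry of the cross-ratio expression the same factorization holds with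
the roles of `X` and `Y` interchanged, so the law is strong hyper Markov. -/
theorem cross_ratio_dirichlet_shm_2way {X Y : Type*} [Fintype X] [Fintype Y]
    (xstar : X) (ystar : Y) (a : X → Y → ℝ) (ha : ∀ x y, 0 < a x y)
    (h : (X → Y → ℝ) → ℝ) :
    (∃ u : (X → Y → ℝ) → ℝ,
      ∀ (marg : Y → ℝ) (cond : X → Y → ℝ),
        (∀ y, 0 < marg y) → (∑ y, marg y = 1) →
        (∀ x y, 0 < cond x y) → (∀ y, ∑ x, cond x y = 1) →
        h (fun x y => ((marg y * cond x y) * (marg ystar * cond xstar ystar))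
              / ((marg ystar * cond x ystar) * (marg y * cond xstar y)))
            * (∏ x, ∏ y, (marg y * cond x y) ^ (a x y - 1))
            * (∏ y, marg y ^ ((Fintype.card X : ℝ) - 1))
          = (∏ y, marg y ^ ((∑ x, a x y) - 1)) * u cond)
    ∧ (∃ u' : (Y → X → ℝ) → ℝ,
      ∀ (marg' : X → ℝ) (cond' : Y → X → ℝ),
        (∀ x, 0 < marg' x) → (∑ x, marg' x = 1) →
        (∀ y x, 0 < cond' y x) → (∀ x, ∑ y, cond' y x = 1) →
        h (fun x y => ((marg' x * cond' y x) * (marg' xstar * cond' ystar xstar))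
              / ((marg' x * cond' ystar x) * (marg' xstar * cond' y xstar)))
            * (∏ x, ∏ y, (marg' x * cond' y x) ^ (a x y - 1))
            * (∏ x, marg' x ^ ((Fintype.card Y : ℝ) - 1))
          = (∏ x, marg' x ^ ((∑ y, a x y) - 1)) * u' cond') := by
  constructor
  · refine ⟨fun cond => h (fun x y => (cond x y * cond xstar ystar)
        / (cond x ystar * cond xstar y)) * ∏ x, ∏ y, cond x y ^ (a x y - 1), ?_⟩
    intro marg cond hm _ hc _
    have harg : (fun x y => ((marg y * cond x y) * (marg ystar * cond xstar ystar))
          / ((marg ystar * cond x ystar) * (marg y * cond xstar y)))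
        = fun x y => (cond x y * cond xstar ystar) / (cond x ystar * cond xstar y) := by
      funext x y
      rw [div_eq_div_iff
        (mul_ne_zero (mul_pos (hm ystar) (hc x ystar)).ne' (mul_pos (hm y) (hc xstar y)).ne')
        (mul_ne_zero (hc x ystar).ne' (hc xstar y).ne')]
      ring
    rw [harg, mul_assoc, aux_prod_split marg cond a hm hc]
    ring
  · refine ⟨fun cond' => h (fun x y => (cond' y x * cond' ystar xstar)
        / (cond' ystar x * cond' y xstar)) * ∏ x, ∏ y, cond' y x ^ (a x y - 1), ?_⟩
    intro marg' cond' hm _ hc _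
    have harg : (fun x y => ((marg' x * cond' y x) * (marg' xstar * cond' ystar xstar))
          / ((marg' x * cond' ystar x) * (marg' xstar * cond' y xstar)))
        = fun x y => (cond' y x * cond' ystar xstar) / (cond' ystar x * cond' y xstar) := by
      funext x y
      rw [div_eq_div_iff
        (mul_ne_zero (mul_pos (hm x) (hc ystar x)).ne' (mul_pos (hm xstar) (hc y xstar)).ne')
        (mul_ne_zero (hc ystar x).ne' (hc y xstar).ne')]
      ring
    have hkey := aux_prod_split marg' (fun y x => cond' y x)
        (fun y x => a x y) hm (fun y x => hc y x)
    rw [harg, mul_assoc,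
      Finset.prod_comm (f := fun x y => (marg' x * cond' y x) ^ (a x y - 1)),
      hkey, Finset.prod_comm (f := fun y x => cond' y x ^ (a x y - 1))]
    ring
end

section
/- Reparametrized Dirichlet density in logistic coordinates: under θ ~ Dirichlet(a₀₀,a₀₁,a₁₀,a₁₁) on the 2×2 table, writing θ_{xy} = (exp(y(α+βx))/(1+exp(α+βx)))·θ_{x+} for x,y∈{0,1}, the marginal law of (θ_{0+},θ_{1+}) is Dirichlet(a₀₊,a₁₊) (i.e., θ_{0+} ~ Beta(a₀₊,a₁₊)), independent of (α,β), and the density of (α,β) with respect to Lebesgue measure on ℝ² is proportional to exp(α·a₀₁)·exp((α+β)a₁₁) / ((1+e^α)^{a₀₊}·(1+e^{α+β})^{a₁₊}). -/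
open Real

lemma key_logistic (m E0 E1 p00 p01 p10 p11 : ℝ) (hm : 0 < m) (hm1 : 0 < 1 - m)
    (hE0 : 0 < E0) (hE1 : 0 < E1) :
    (m * (1 / (1 + E0))) ^ (p00 - 1) * (m * (E0 / (1 + E0))) ^ (p01 - 1)
      * ((1 - m) * (1 / (1 + E1))) ^ (p10 - 1) * ((1 - m) * (E1 / (1 + E1))) ^ (p11 - 1)
      * (m * (1 - m)) * (E0 / (1 + E0) ^ 2) * (E1 / (1 + E1) ^ 2)
    = m ^ (p00 + p01 - 1) * (1 - m) ^ (p10 + p11 - 1)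
      * (E0 ^ p01 * E1 ^ p11 / ((1 + E0) ^ (p00 + p01) * (1 + E1) ^ (p10 + p11))) := by
  have h0 : (0:ℝ) < 1 + E0 := by linarith
  have h1 : (0:ℝ) < 1 + E1 := by linarith
  rw [show m * (1 / (1 + E0)) = m / (1 + E0) by ring,
      show m * (E0 / (1 + E0)) = m * E0 / (1 + E0) by ring,
      show (1 - m) * (1 / (1 + E1)) = (1 - m) / (1 + E1) by ring,
      show (1 - m) * (E1 / (1 + E1)) = (1 - m) * E1 / (1 + E1) by ring,
      Real.rpow_def_of_pos (by positivity), Real.rpow_def_of_pos (by positivity),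
      Real.rpow_def_of_pos (by positivity), Real.rpow_def_of_pos (by positivity),
      Real.rpow_def_of_pos hm, Real.rpow_def_of_pos hm1,
      Real.rpow_def_of_pos hE0, Real.rpow_def_of_pos hE1,
      Real.rpow_def_of_pos h0, Real.rpow_def_of_pos h1,
      Real.log_div hm.ne' h0.ne', Real.log_div (by positivity) h0.ne',
      Real.log_div hm1.ne' h1.ne', Real.log_div (by positivity) h1.ne',
      Real.log_mul hm.ne' hE0.ne', Real.log_mul hm1.ne' hE1.ne',
      show m * (1 - m) = Real.exp (Real.log m) * Real.exp (Real.log (1 - m)) by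
        rw [Real.exp_log hm, Real.exp_log hm1],
      show E0 = Real.exp (Real.log E0) from (Real.exp_log hE0).symm,
      show E1 = Real.exp (Real.log E1) from (Real.exp_log hE1).symm,
      show (1 + Real.exp (Real.log E0)) ^ 2
          = Real.exp ((2:ℕ) * Real.log (1 + Real.exp (Real.log E0))) by
        rw [← Real.log_pow]; exact (Real.exp_log (by positivity)).symm,
      show (1 + Real.exp (Real.log E1)) ^ 2
          = Real.exp ((2:ℕ) * Real.log (1 + Real.exp (Real.log E1))) by
        rw [← Real.log_pow]; exact (Real.exp_log (by positivity)).symm]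
  simp only [Real.log_exp]
  simp only [← Real.exp_sub, ← Real.exp_add, div_mul_eq_mul_div, mul_div_assoc]
  rw [Real.exp_eq_exp]
  push_cast
  ring



/-- Density of the `Beta(p,q)` distribution at `t`. -/
noncomputable def betaDens (p q t : ℝ) : ℝ :=
  (Real.Gamma (p + q) / (Real.Gamma p * Real.Gamma q)) * t ^ (p - 1) * (1 - t) ^ (q - 1)

/-- Density of the `Dirichlet(a)` distribution on the 2×2 probability simplex. -/
noncomputable def dirichletDens (a θ : Fin 2 → Fin 2 → ℝ) : ℝ :=
  (Real.Gamma (∑ x, ∑ y, a x y) / ∏ x, ∏ y, Real.Gamma (a x y))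
    * ∏ x, ∏ y, θ x y ^ (a x y - 1)

/-- reparametrized Dirichlet density in logistic coordinates.
Under `θ ~ Dirichlet(a)` on the 2×2 table, writing
`θ_{xy} = (exp(y(α+βx))/(1+exp(α+βx)))·θ_{x+}` with `m = θ_{0+}`,
`α = log(θ₀₁/θ₀₀)` and `β = log(θ₁₁θ₀₀/(θ₁₀θ₀₁))` (so the change of variables
`(θ₀₀,θ₀₁,θ₁₀) ↦ (m,α,β)` has Jacobian factor
`m(1−m)·e^α/(1+e^α)²·e^{α+β}/(1+e^{α+β})²`), the induced density of `(m,α,β)`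
factorizes as the `Beta(a_{0+},a_{1+})` density of `m` — so `θ_{0+}` is
independent of `(α,β)` — times a density of `(α,β)` proportional to
`exp(α a₀₁)exp((α+β)a₁₁)/((1+e^α)^{a₀+}(1+e^{α+β})^{a₁+})`. -/
theorem dirichlet_logistic_coordinates (a : Fin 2 → Fin 2 → ℝ)
    (ha : ∀ x y, 0 < a x y) :
    ∃ c : ℝ, 0 < c ∧ ∀ (m α β : ℝ), m ∈ Set.Ioo (0:ℝ) 1 →
      dirichletDens a
          (fun x y =>
            (if x = 0 then m else 1 - m)
              * (if y = 0 then 1 / (1 + Real.exp (α + if x = 0 then 0 else β))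
                else Real.exp (α + if x = 0 then 0 else β)
                  / (1 + Real.exp (α + if x = 0 then 0 else β))))
          * (m * (1 - m))
          * (Real.exp α / (1 + Real.exp α) ^ 2)
          * (Real.exp (α + β) / (1 + Real.exp (α + β)) ^ 2)
        = betaDens (a 0 0 + a 0 1) (a 1 0 + a 1 1) m
            * (c * Real.exp (α * a 0 1) * Real.exp ((α + β) * a 1 1)
              / ((1 + Real.exp α) ^ (a 0 0 + a 0 1)
                * (1 + Real.exp (α + β)) ^ (a 1 0 + a 1 1))) := by
  have hG : ∀ x y, 0 < Real.Gamma (a x y) := fun x y => Real.Gamma_pos_of_pos (ha x y)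
  have hGp : 0 < Real.Gamma (a 0 0 + a 0 1) :=
    Real.Gamma_pos_of_pos (by have := ha 0 0; have := ha 0 1; linarith)
  have hGq : 0 < Real.Gamma (a 1 0 + a 1 1) :=
    Real.Gamma_pos_of_pos (by have := ha 1 0; have := ha 1 1; linarith)
  refine ⟨Real.Gamma (a 0 0 + a 0 1) * Real.Gamma (a 1 0 + a 1 1)
      / (Real.Gamma (a 0 0) * Real.Gamma (a 0 1) * (Real.Gamma (a 1 0) * Real.Gamma (a 1 1))),
    div_pos (mul_pos hGp hGq) (mul_pos (mul_pos (hG 0 0) (hG 0 1)) (mul_pos (hG 1 0) (hG 1 1))),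
    fun m α β hm => ?_⟩
  have hkey := key_logistic m (Real.exp α) (Real.exp (α + β)) (a 0 0) (a 0 1) (a 1 0) (a 1 1)
    hm.1 (by have := hm.2; linarith) (Real.exp_pos _) (Real.exp_pos _)
  rw [dirichletDens, betaDens]
  simp only [Fin.sum_univ_two, Fin.prod_univ_two, if_true,
    show (1 : Fin 2) ≠ 0 by decide, if_false, add_zero, eq_self_iff_true, if_pos]
  rw [Real.exp_mul, Real.exp_mul,
    show a 0 0 + a 0 1 + (a 1 0 + a 1 1) = a 0 0 + a 0 1 + (a 1 0 + a 1 1) from rfl]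
  calc (Real.Gamma (a 0 0 + a 0 1 + (a 1 0 + a 1 1))
          / (Real.Gamma (a 0 0) * Real.Gamma (a 0 1) * (Real.Gamma (a 1 0) * Real.Gamma (a 1 1))))
        * ((m * (1 / (1 + Real.exp α))) ^ (a 0 0 - 1) * (m * (Real.exp α / (1 + Real.exp α))) ^ (a 0 1 - 1)
          * (((1 - m) * (1 / (1 + Real.exp (α + β)))) ^ (a 1 0 - 1)
            * ((1 - m) * (Real.exp (α + β) / (1 + Real.exp (α + β)))) ^ (a 1 1 - 1)))
        * (m * (1 - m)) * (Real.exp α / (1 + Real.exp α) ^ 2)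
        * (Real.exp (α + β) / (1 + Real.exp (α + β)) ^ 2)
      = (Real.Gamma (a 0 0 + a 0 1 + (a 1 0 + a 1 1))
          / (Real.Gamma (a 0 0) * Real.Gamma (a 0 1) * (Real.Gamma (a 1 0) * Real.Gamma (a 1 1))))
        * ((m * (1 / (1 + Real.exp α))) ^ (a 0 0 - 1) * (m * (Real.exp α / (1 + Real.exp α))) ^ (a 0 1 - 1)
          * ((1 - m) * (1 / (1 + Real.exp (α + β)))) ^ (a 1 0 - 1)
            * ((1 - m) * (Real.exp (α + β) / (1 + Real.exp (α + β)))) ^ (a 1 1 - 1)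
          * (m * (1 - m)) * (Real.exp α / (1 + Real.exp α) ^ 2)
          * (Real.exp (α + β) / (1 + Real.exp (α + β)) ^ 2)) := by ring
    _ = (Real.Gamma (a 0 0 + a 0 1 + (a 1 0 + a 1 1))
          / (Real.Gamma (a 0 0) * Real.Gamma (a 0 1) * (Real.Gamma (a 1 0) * Real.Gamma (a 1 1))))
        * (m ^ (a 0 0 + a 0 1 - 1) * (1 - m) ^ (a 1 0 + a 1 1 - 1)
          * (Real.exp α ^ a 0 1 * Real.exp (α + β) ^ a 1 1
            / ((1 + Real.exp α) ^ (a 0 0 + a 0 1) * (1 + Real.exp (α + β)) ^ (a 1 0 + a 1 1)))) := by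
        rw [hkey]
    _ = _ := by
        have hpq : (Real.Gamma (a 0 0 + a 0 1) * Real.Gamma (a 1 0 + a 1 1)) ≠ 0 :=
          (mul_pos hGp hGq).ne'
        have hc : Real.Gamma (a 0 0 + a 0 1 + (a 1 0 + a 1 1))
              / (Real.Gamma (a 0 0) * Real.Gamma (a 0 1) * (Real.Gamma (a 1 0) * Real.Gamma (a 1 1)))
            = Real.Gamma ((a 0 0 + a 0 1) + (a 1 0 + a 1 1))
                / (Real.Gamma (a 0 0 + a 0 1) * Real.Gamma (a 1 0 + a 1 1))
              * ((Real.Gamma (a 0 0 + a 0 1) * Real.Gamma (a 1 0 + a 1 1))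
                / (Real.Gamma (a 0 0) * Real.Gamma (a 0 1) * (Real.Gamma (a 1 0) * Real.Gamma (a 1 1)))) := by
          rw [div_mul_div_comm, mul_comm (Real.Gamma ((a 0 0 + a 0 1) + (a 1 0 + a 1 1))),
            mul_div_mul_left _ _ hpq]
        rw [hc]
        ring
end
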